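/- Let ω > 0, let c_n = cosh(ωn) for n ∈ ℤ, and define a₁(n) = −√(c_n c_{n+2}) / c_{n+1}. Then the series Σ_{n∈ℤ} log(a₁(n)²) converges and equals 2ω. -/

import Mathlib

open Filter Topology Real

/-!
Write `L n = log (cosh (ω n))` and `d n = L (n + 1) - L n`. Then `log (a₁(n)²) = d (n + 1) - d n`,
so the series telescopes. Since `cosh (x + ω) / cosh x = cosh ω + sinh ω · tanh x`, `d` tends to
`ω` at `+∞` and to `-ω` at `-∞`, and the sum is `ω - (-ω) = 2ω`. The identity
`cosh x · cosh (x + 2ω) = cosh (x + ω)² + sinh ω²` makes every term nonnegative (`d` is monotone),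
which upgrades the telescoping of partial sums to unconditional summation over `ℤ`.
-/

theorem Real.tendsto_cosh_atTop : Tendsto cosh atTop atTop := by
  refine tendsto_atTop_mono (fun x => ?_) (tendsto_exp_atTop.atTop_div_const two_pos)
  rw [cosh_eq]
  gcongr
  exact le_add_of_nonneg_right (exp_pos _).le

theorem Real.tendsto_tanh_atTop : Tendsto tanh atTop (𝓝 1) := by
  have htanh : ∀ x, tanh x = 1 - exp (-x) / cosh x := fun x => by
    rw [tanh_eq_sinh_div_cosh, ← cosh_sub_sinh]
    field_simp
    ring
  simpa only [sub_zero] using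
    ((tendsto_exp_neg_atTop_nhds_zero.div_atTop tendsto_cosh_atTop).const_sub 1).congr
      fun x => (htanh x).symm

theorem Real.tendsto_tanh_atBot : Tendsto tanh atBot (𝓝 (-1)) := by
  simpa [Function.comp_def] using (tendsto_tanh_atTop.comp tendsto_neg_atBot_atTop).neg

theorem Real.cosh_add_div_cosh (x a : ℝ) : cosh (x + a) / cosh x = cosh a + sinh a * tanh x := by
  rw [cosh_add, tanh_eq_sinh_div_cosh]
  field_simp

theorem Real.tendsto_log_cosh_add_div_cosh_atTop (a : ℝ) :
    Tendsto (fun x => log (cosh (x + a) / cosh x)) atTop (𝓝 a) := by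
  have h : Tendsto (fun x => cosh (x + a) / cosh x) atTop (𝓝 (exp a)) := by
    simpa only [cosh_add_div_cosh, mul_one, cosh_add_sinh] using
      (tendsto_tanh_atTop.const_mul (sinh a)).const_add (cosh a)
  simpa only [log_exp] using h.log (exp_pos a).ne'

theorem Real.tendsto_log_cosh_add_div_cosh_atBot (a : ℝ) :
    Tendsto (fun x => log (cosh (x + a) / cosh x)) atBot (𝓝 (-a)) := by
  have h : Tendsto (fun x => cosh (x + a) / cosh x) atBot (𝓝 (exp (-a))) := by
    simpa only [cosh_add_div_cosh, mul_neg, mul_one, ← sub_eq_add_neg, cosh_sub_sinh] using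
      (tendsto_tanh_atBot.const_mul (sinh a)).const_add (cosh a)
  simpa only [log_exp] using h.log (exp_pos _).ne'

theorem Real.cosh_mul_cosh_add_two_mul (x a : ℝ) :
    cosh x * cosh (x + 2 * a) = cosh (x + a) ^ 2 + sinh a ^ 2 := by
  rw [cosh_add, cosh_add, cosh_two_mul, sinh_two_mul]
  linear_combination sinh a ^ 2 * cosh_sq_sub_sinh_sq x

theorem Real.sq_cosh_add_le_cosh_mul_cosh (x a : ℝ) :
    cosh (x + a) ^ 2 ≤ cosh x * cosh (x + 2 * a) := by
  rw [cosh_mul_cosh_add_two_mul]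
  exact le_add_of_nonneg_right (sq_nonneg _)

theorem Monotone.hasSum_sub_of_tendsto {d : ℤ → ℝ} {a b : ℝ} (hd : Monotone d)
    (ha : Tendsto d atTop (𝓝 a)) (hb : Tendsto d atBot (𝓝 b)) :
    HasSum (fun n => d (n + 1) - d n) (a - b) := by
  have hnonneg : ∀ n, 0 ≤ d (n + 1) - d n := fun n => sub_nonneg.2 (hd (Int.le_add_one le_rfl))
  have hpos : HasSum (fun n : ℕ => d (n + 1) - d n) (a - d 0) := by
    rw [hasSum_iff_tendsto_nat_of_nonneg (fun n => hnonneg n)]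
    have hsum : ∀ N : ℕ, ∑ i ∈ Finset.range N, (d (i + 1) - d i) = d N - d 0 := fun N => by
      simpa using Finset.sum_range_sub (fun i : ℕ => d i) N
    simp only [hsum]
    exact (ha.comp tendsto_natCast_atTop_atTop).sub_const _
  have hneg : HasSum (fun n : ℕ => d (-(n + 1) + 1) - d (-(n + 1))) (d 0 - b) := by
    rw [hasSum_iff_tendsto_nat_of_nonneg (fun n => hnonneg _)]
    have hsum : ∀ N : ℕ, ∑ i ∈ Finset.range N, (d (-(i + 1) + 1) - d (-(i + 1))) = d 0 - d (-N) :=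
      fun N => by
        have h := Finset.sum_range_sub' (fun i : ℕ => d (-i)) N
        simp only [Nat.cast_zero, neg_zero] at h
        rw [← h]
        refine Finset.sum_congr rfl fun i _ => ?_
        push_cast
        ring_nf
    simp only [hsum]
    exact ((hb.comp tendsto_neg_atTop_atBot).comp tendsto_natCast_atTop_atTop).const_sub _
  have := HasSum.of_nat_of_neg_add_one (f := fun n : ℤ => d (n + 1) - d n) hpos hneg
  rwa [sub_add_sub_cancel] at this

theorem reflectionless_log_sum (ω : ℝ) (hω : 0 < ω)
    (c : ℤ → ℝ) (hc : ∀ n : ℤ, c n = Real.cosh (ω * n))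
    (a1 : ℤ → ℝ) (ha1 : ∀ n : ℤ, a1 n = -Real.sqrt (c n * c (n + 2)) / c (n + 1)) :
    HasSum (fun n : ℤ => Real.log ((a1 n) ^ 2)) (2 * ω) := by
  have hc_pos : ∀ n, 0 < c n := fun n => hc n ▸ cosh_pos _
  have ha1_sq : ∀ n, a1 n ^ 2 = c n * c (n + 2) / c (n + 1) ^ 2 := fun n => by
    rw [ha1, div_pow, neg_sq, sq_sqrt (mul_pos (hc_pos n) (hc_pos (n + 2))).le]
  obtain ⟨d, hd⟩ : ∃ d : ℤ → ℝ, ∀ n, d n = log (c (n + 1)) - log (c n) := ⟨_, fun _ => rfl⟩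
  have hterm : ∀ n, log (a1 n ^ 2) = d (n + 1) - d n := fun n => by
    rw [ha1_sq, log_div (mul_pos (hc_pos n) (hc_pos _)).ne' (pow_pos (hc_pos _) 2).ne',
      log_mul (hc_pos n).ne' (hc_pos _).ne', log_pow, hd, hd, add_assoc, one_add_one_eq_two]
    push_cast
    ring
  have hd_mono : Monotone d := monotone_int_of_le_succ fun n => by
    rw [← sub_nonneg, ← hterm, ha1_sq]
    refine log_nonneg ((one_le_div (pow_pos (hc_pos _) 2)).2 ?_)
    rw [hc, hc, hc]
    push_cast
    rw [mul_add, mul_add, mul_one, mul_comm ω 2]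
    exact sq_cosh_add_le_cosh_mul_cosh (ω * n) ω
  have hd_eq : ∀ n : ℤ, log (cosh (ω * n + ω) / cosh (ω * n)) = d n := fun n => by
    rw [hd, ← log_div (hc_pos _).ne' (hc_pos n).ne', hc, hc]
    push_cast
    rw [mul_add, mul_one]
  have hd_top : Tendsto d atTop (𝓝 ω) :=
    ((tendsto_log_cosh_add_div_cosh_atTop ω).comp
      (tendsto_intCast_atTop_atTop.const_mul_atTop hω)).congr hd_eq
  have hd_bot : Tendsto d atBot (𝓝 (-ω)) :=
    ((tendsto_log_cosh_add_div_cosh_atBot ω).comp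
      ((tendsto_intCast_atBot_iff.2 tendsto_id).const_mul_atBot hω)).congr hd_eq
  simpa only [hterm, sub_neg_eq_add, two_mul] using hd_mono.hasSum_sub_of_tendsto hd_top hd_bot
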